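/- For all elements u, v, w of the Clifford algebra Cl(V,Q) of a non-degenerate quadratic form, the duality formula ⟨u, v·w⟩ = ⟨ṽ·u, w⟩ holds, where · is the Clifford product, ~ is reversion, and ⟨·,·⟩ is the extension of the polar bilinear form of Q to the Clifford algebra. -/
import Mathlib


noncomputable section
open CliffordAlgebra

/-- The quadratic form `Q(x) = ε₁x₁² + ⋯ + εₙxₙ²`. -/
def Qe {n : ℕ} (ε : Fin n → ℝ) : QuadraticForm ℝ (Fin n → ℝ) :=
  QuadraticMap.weightedSumSquares ℝ ε

/-- The orthonormal generators `eᵢ` of `Cl(V,Q)`, with `eᵢ² = εᵢ`. -/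
def gen {n : ℕ} (ε : Fin n → ℝ) (i : Fin n) : CliffordAlgebra (Qe ε) :=
  ι (Qe ε) (Pi.single i 1)

/-- The basis monomial `e_I = e_{i₁}⋯e_{iₛ}`, `i₁ < ⋯ < iₛ` the elements of `I`. -/
def eProd {n : ℕ} (ε : Fin n → ℝ) (I : Finset (Fin n)) : CliffordAlgebra (Qe ε) :=
  ((I.sort (· ≤ ·)).map (gen ε)).prod

variable {n : ℕ} (ε : Fin n → ℝ)

lemma Qe_single (i : Fin n) : Qe ε (Pi.single i 1) = ε i := by
  simp [Qe, QuadraticMap.weightedSumSquares_apply, Pi.single_apply, mul_ite]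

lemma gen_sq (i : Fin n) : gen ε i * gen ε i = algebraMap ℝ _ (ε i) := by
  rw [gen, ι_sq_scalar, Qe_single]

lemma gen_anticomm {i j : Fin n} (h : i ≠ j) :
    gen ε i * gen ε j = -(gen ε j * gen ε i) := by
  have H := ι_mul_ι_add_swap (Q := Qe ε) (Pi.single i 1) (Pi.single j 1)
  have hp : QuadraticMap.polar (⇑(Qe ε)) (Pi.single i 1) (Pi.single j 1) = 0 := by
    simp only [QuadraticMap.polar, Qe, QuadraticMap.weightedSumSquares_apply,
      Pi.add_apply, Pi.single_apply, smul_eq_mul]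
    rw [sub_sub, ← Finset.sum_add_distrib, ← Finset.sum_sub_distrib]
    apply Finset.sum_eq_zero
    intro k _
    by_cases hk : k = i <;> by_cases hk' : k = j <;> simp_all
  rw [hp, map_zero] at H
  exact eq_neg_of_add_eq_zero_left H

lemma eProd_empty : eProd ε ∅ = 1 := by simp [eProd]

lemma eProd_singleton (i : Fin n) : eProd ε {i} = gen ε i := by
  simp [eProd]

lemma eProd_insert_min {j : Fin n} {S : Finset (Fin n)} (h1 : j ∉ S)
    (h2 : ∀ b ∈ S, j ≤ b) : eProd ε (insert j S) = gen ε j * eProd ε S := by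
  rw [eProd, Finset.sort_insert (r := (· ≤ ·)) h2 h1, List.map_cons, List.prod_cons, eProd]

lemma erase_erase_comm (a b : Fin n) (s : Finset (Fin n)) :
    (s.erase a).erase b = (s.erase b).erase a := by
  ext x; simp [Finset.mem_erase]; tauto

lemma gen_mul_eProd (i : Fin n) (J : Finset (Fin n)) :
    gen ε i * eProd ε J = ((-1 : ℝ) ^ (J.filter (· < i)).card) •
      (if i ∈ J then (ε i) • eProd ε (J.erase i) else eProd ε (insert i J)) := by
  induction J using Finset.strongInduction with
  | _ J ih =>
    rcases J.eq_empty_or_nonempty with rfl | hJ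
    · simp [eProd_empty, eProd_singleton]
    obtain ⟨j, hjJ, hjle⟩ : ∃ j ∈ J, ∀ b ∈ J, j ≤ b :=
      ⟨J.min' hJ, J.min'_mem hJ, fun b hb => J.min'_le b hb⟩
    have hjE : j ∉ J.erase j := Finset.notMem_erase j J
    have heP : eProd ε J = gen ε j * eProd ε (J.erase j) := by
      conv_lhs => rw [← Finset.insert_erase hjJ]
      exact eProd_insert_min ε hjE (fun b hb => hjle b (Finset.mem_of_mem_erase hb))
    rcases lt_trichotomy i j with hij | rfl | hij
    · -- i < j : i ∉ J, no sign
      have hiJ : i ∉ J := fun h => absurd (hjle i h) (not_le.mpr hij)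
      have hfilt : J.filter (· < i) = ∅ :=
        Finset.filter_eq_empty_iff.mpr fun b hb => not_lt.mpr (le_trans hij.le (hjle b hb))
      rw [if_neg hiJ, hfilt]
      simp only [Finset.card_empty, pow_zero, one_smul]
      exact (eProd_insert_min ε hiJ (fun b hb => (le_trans hij.le (hjle b hb)))).symm
    · -- i = j
      have hfilt : J.filter (· < i) = ∅ :=
        Finset.filter_eq_empty_iff.mpr fun b hb => not_lt.mpr (hjle b hb)
      rw [if_pos hjJ, hfilt, heP, ← mul_assoc, gen_sq]
      simp [Algebra.smul_def]
    · -- j < i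
      have hji : j ≠ i := ne_of_lt hij
      have hiJ' : i ∈ J ↔ i ∈ J.erase j := by
        rw [Finset.mem_erase]; exact ⟨fun h => ⟨hji.symm, h⟩, fun h => h.2⟩
      have hfc : (J.filter (· < i)).card = ((J.erase j).filter (· < i)).card + 1 := by
        have hins : J.filter (· < i) = insert j ((J.erase j).filter (· < i)) := by
          ext b
          simp only [Finset.mem_filter, Finset.mem_insert, Finset.mem_erase]
          constructor
          · rintro ⟨hb, hbi⟩
            by_cases h : b = j
            · exact Or.inl h
            · exact Or.inr ⟨⟨h, hb⟩, hbi⟩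
          · rintro (rfl | ⟨⟨-, hb⟩, hbi⟩)
            · exact ⟨hjJ, hij⟩
            · exact ⟨hb, hbi⟩
        rw [hins, Finset.card_insert_of_notMem (by simp [Finset.mem_filter, Finset.mem_erase])]
      rw [heP, ← mul_assoc, gen_anticomm ε (fun h => hji h.symm), neg_mul, mul_assoc,
        ih (J.erase j) (Finset.erase_ssubset hjJ), hfc]
      by_cases hiJ : i ∈ J
      · rw [if_pos hiJ, if_pos (hiJ'.mp hiJ)]
        have hjmem : j ∈ J.erase i := Finset.mem_erase.mpr ⟨hji, hjJ⟩
        have h1 : j ∉ (J.erase j).erase i := fun h => hjE (Finset.mem_of_mem_erase h)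
        have h2 : ∀ b ∈ (J.erase j).erase i, j ≤ b := fun b hb =>
          hjle b (Finset.mem_of_mem_erase (Finset.mem_of_mem_erase hb))
        have h3 : insert j ((J.erase j).erase i) = J.erase i := by
          rw [erase_erase_comm j i J]
          exact Finset.insert_erase hjmem
        have heP2 : eProd ε (J.erase i) = gen ε j * eProd ε ((J.erase j).erase i) := by
          rw [← h3]; exact eProd_insert_min ε h1 h2
        rw [heP2, mul_smul_comm, mul_smul_comm, pow_succ]
        module
      · rw [if_neg hiJ, if_neg (fun h => hiJ (hiJ'.mpr h))]
        have hiJe : i ∉ J.erase j := fun h => hiJ (Finset.mem_of_mem_erase h)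
        have h1 : j ∉ insert i (J.erase j) := by
          simp only [Finset.mem_insert]
          rintro (rfl | h)
          · exact hji rfl
          · exact hjE h
        have h2 : ∀ b ∈ insert i (J.erase j), j ≤ b := by
          intro b hb
          rcases Finset.mem_insert.mp hb with rfl | h
          · exact hij.le
          · exact hjle b (Finset.mem_of_mem_erase h)
        have heP3 : eProd ε (insert i J) = gen ε j * eProd ε (insert i (J.erase j)) := by
          have h4 : insert i J = insert j (insert i (J.erase j)) := by
            rw [Finset.insert_comm, Finset.insert_erase hjJ]
          rw [h4]
          exact eProd_insert_min ε h1 h2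
        rw [heP3, mul_smul_comm, pow_succ]
        module

lemma filter_lt_erase {i : Fin n} (J : Finset (Fin n)) :
    ((J.erase i).filter (· < i)) = J.filter (· < i) := by
  ext b
  simp only [Finset.mem_filter, Finset.mem_erase]
  exact ⟨fun h => ⟨h.1.2, h.2⟩, fun h => ⟨⟨ne_of_lt h.2, h.1⟩, h.2⟩⟩

section withB
variable (Bf : CliffordAlgebra (Qe ε) →ₗ[ℝ] CliffordAlgebra (Qe ε) →ₗ[ℝ] ℝ)

lemma Bf_eProd
    (hdet : ∀ (s : ℕ) (I J : Finset (Fin n)) (hI : I.card = s) (hJ : J.card = s),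
      Bf (eProd ε I) (eProd ε J) =
        Matrix.det (Matrix.of fun a b : Fin s =>
          if ((I.orderIsoOfFin hI a : Fin n) = (J.orderIsoOfFin hJ b : Fin n))
          then ε (I.orderIsoOfFin hI a) else 0))
    (hgrade : ∀ I J : Finset (Fin n), I.card ≠ J.card →
      Bf (eProd ε I) (eProd ε J) = 0)
    (I J : Finset (Fin n)) :
    Bf (eProd ε I) (eProd ε J) = if I = J then ∏ k ∈ I, ε k else 0 := by
  by_cases hc : I.card = J.card
  · rw [hdet J.card I J hc rfl]
    by_cases hIJ : I = J
    · subst hIJ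
      rw [if_pos rfl]
      have hdiag : (Matrix.of fun a b : Fin I.card =>
          if ((I.orderIsoOfFin hc a : Fin n) = (I.orderIsoOfFin rfl b : Fin n))
          then ε (I.orderIsoOfFin hc a) else 0) =
          Matrix.diagonal (fun a => ε (I.orderIsoOfFin hc a)) := by
        ext a b
        by_cases hab : a = b
        · subst hab
          simp [Matrix.diagonal]
        · rw [Matrix.of_apply, Matrix.diagonal_apply_ne _ hab, if_neg]
          intro h
          exact hab (by
            have := Subtype.coe_injective (a₁ := (I.orderIsoOfFin hc a))
              (a₂ := (I.orderIsoOfFin rfl b)) h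
            exact (I.orderIsoOfFin hc).injective (by
              exact_mod_cast this))
      rw [hdiag, Matrix.det_diagonal]
      rw [← Finset.prod_coe_sort I ε]
      exact Fintype.prod_equiv (I.orderIsoOfFin hc).toEquiv _ _ (fun a => rfl)
    · rw [if_neg hIJ]
      have hns : ¬ I ⊆ J := by
        intro hsub
        exact hIJ (Finset.eq_of_subset_of_card_le hsub (le_of_eq hc.symm))
      obtain ⟨x, hxI, hxJ⟩ := Finset.not_subset.mp hns
      apply Matrix.det_eq_zero_of_row_eq_zero ((I.orderIsoOfFin hc).symm ⟨x, hxI⟩)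
      intro b
      rw [Matrix.of_apply, if_neg]
      intro h
      rw [OrderIso.apply_symm_apply] at h
      apply hxJ
      have hx : x = ((J.orderIsoOfFin rfl b : J) : Fin n) := h
      rw [hx]
      exact (J.orderIsoOfFin rfl b).2
  · rw [hgrade I J hc, if_neg (fun h : I = J => hc (by rw [h]))]

lemma key_lemma
    (hB : ∀ I J : Finset (Fin n),
      Bf (eProd ε I) (eProd ε J) = if I = J then ∏ k ∈ I, ε k else 0)
    (i : Fin n) (I J : Finset (Fin n)) :
    Bf (eProd ε I) (gen ε i * eProd ε J) = Bf (gen ε i * eProd ε I) (eProd ε J) := by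
  rw [gen_mul_eProd, gen_mul_eProd]
  by_cases hI : i ∈ I <;> by_cases hJ : i ∈ J
  · rw [if_pos hI, if_pos hJ]
    have h1 : I ≠ J.erase i := fun h => (Finset.notMem_erase i J) (h ▸ hI)
    have h2 : I.erase i ≠ J := fun h => (Finset.notMem_erase i I) (h.symm ▸ hJ)
    simp [hB, h1, h2]
  · rw [if_pos hI, if_neg hJ]
    by_cases h : I.erase i = J
    · have hIeq : I = insert i J := by rw [← h, Finset.insert_erase hI]
      subst hIeq
      rw [Finset.erase_insert hJ] at h ⊢
      simp only [map_smul, LinearMap.smul_apply, LinearMap.map_smul, hB, if_pos rfl,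
        Finset.erase_insert hJ, smul_eq_mul, if_pos (rfl : insert i J = insert i J)]
      rw [Finset.prod_insert hJ]
      have hf : ((insert i J).filter (· < i)) = J.filter (· < i) := by
        rw [← filter_lt_erase (i := i) (insert i J), Finset.erase_insert hJ]
      rw [hf]
      simp only [if_true]
    · have h2 : I ≠ insert i J := by
        intro hh
        exact h (by rw [hh, Finset.erase_insert hJ])
      simp [hB, h, h2]
  · rw [if_neg hI, if_pos hJ]
    by_cases h : I = J.erase i
    · subst h
      rw [Finset.insert_erase hJ]
      simp only [map_smul, LinearMap.smul_apply, LinearMap.map_smul, hB, if_pos rfl,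
        smul_eq_mul, if_pos (rfl : J = J)]
      rw [← Finset.mul_prod_erase J ε hJ]
      rw [filter_lt_erase (i := i) J]
      simp only [if_true]
    · have h2 : insert i I ≠ J := by
        intro hh
        exact h (by rw [← hh, Finset.erase_insert hI])
      simp [hB, h, h2]
  · rw [if_neg hI, if_neg hJ]
    have h1 : I ≠ insert i J := fun h => hI (h ▸ Finset.mem_insert_self i J)
    have h2 : insert i I ≠ J := fun h => hJ (h ▸ Finset.mem_insert_self i I)
    simp [hB, h1, h2]

end withB

lemma mem_span_eProd (u : CliffordAlgebra (Qe ε)) :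
    u ∈ Submodule.span ℝ (Set.range (eProd ε)) := by
  set M := Submodule.span ℝ (Set.range (eProd ε)) with hM
  have hmem : ∀ I, eProd ε I ∈ M := fun I => Submodule.subset_span ⟨I, rfl⟩
  have hgen : ∀ (i : Fin n), ∀ m ∈ M, gen ε i * m ∈ M := by
    intro i m hm
    induction hm using Submodule.span_induction with
    | mem x hx =>
      obtain ⟨J, rfl⟩ := hx
      rw [gen_mul_eProd]
      split
      · exact M.smul_mem _ (M.smul_mem _ (hmem _))
      · exact M.smul_mem _ (hmem _)
    | zero => simp
    | add x y hx hy ihx ihy => rw [mul_add]; exact M.add_mem ihx ihy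
    | smul a x hx ihx => rw [mul_smul_comm]; exact M.smul_mem a ihx
  have hlist : ∀ (l : List (Fin n)), ∀ m ∈ M, (l.map (gen ε)).prod * m ∈ M := by
    intro l
    induction l with
    | nil => intro m hm; simpa using hm
    | cons a t iht =>
      intro m hm
      rw [List.map_cons, List.prod_cons, mul_assoc]
      exact hgen a _ (iht m hm)
  have hmul : ∀ a ∈ M, ∀ b ∈ M, a * b ∈ M := by
    intro a ha b hb
    induction ha using Submodule.span_induction with
    | mem x hx =>
      obtain ⟨I, rfl⟩ := hx
      exact hlist _ b hb
    | zero => simp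
    | add x y hx hy ihx ihy => rw [add_mul]; exact M.add_mem ihx ihy
    | smul a x hx ihx => rw [smul_mul_assoc]; exact M.smul_mem a ihx
  induction u using CliffordAlgebra.induction with
  | algebraMap r =>
    rw [Algebra.algebraMap_eq_smul_one, ← eProd_empty ε]
    exact M.smul_mem r (hmem ∅)
  | ι x =>
    rw [pi_eq_sum_univ x, map_sum]
    apply M.sum_mem
    intro i _
    rw [map_smul]
    apply M.smul_mem
    have : (ι (Qe ε)) (fun j => if i = j then (1:ℝ) else 0) = gen ε i := by
      rw [gen]
      congr 1
      ext j
      rw [Pi.single_apply]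
      simp [eq_comm]
    rw [this, ← eProd_singleton ε]
    exact hmem {i}
  | mul a b ha hb => exact hmul a ha b hb
  | add a b ha hb => exact M.add_mem ha hb


/-- the duality formula `⟨u, v·w⟩ = ⟨ṽ·u, w⟩` for the extension
`⟨·,·⟩` of the polar bilinear form to the Clifford algebra. -/
theorem stmt2 {n : ℕ} (ε : Fin n → ℝ) (hε : ∀ i, ε i = 1 ∨ ε i = -1)
    (Bf : CliffordAlgebra (Qe ε) →ₗ[ℝ] CliffordAlgebra (Qe ε) →ₗ[ℝ] ℝ)
    (hdet : ∀ (s : ℕ) (I J : Finset (Fin n)) (hI : I.card = s) (hJ : J.card = s),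
      Bf (eProd ε I) (eProd ε J) =
        Matrix.det (Matrix.of fun a b : Fin s =>
          if ((I.orderIsoOfFin hI a : Fin n) = (J.orderIsoOfFin hJ b : Fin n))
          then ε (I.orderIsoOfFin hI a) else 0))
    (hgrade : ∀ I J : Finset (Fin n), I.card ≠ J.card →
      Bf (eProd ε I) (eProd ε J) = 0) :
    ∀ u v w : CliffordAlgebra (Qe ε), Bf u (v * w) = Bf (reverse v * u) w := by
  have hB := Bf_eProd ε Bf hdet hgrade
  have key := key_lemma ε Bf hB
  -- duality holds for each generator, for all u w
  have hgen : ∀ (i : Fin n) (u w : CliffordAlgebra (Qe ε)),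
      Bf u (gen ε i * w) = Bf (gen ε i * u) w := by
    intro i u w
    induction mem_span_eProd ε u using Submodule.span_induction with
    | mem x hx =>
      obtain ⟨I, rfl⟩ := hx
      induction mem_span_eProd ε w using Submodule.span_induction with
      | mem y hy =>
        obtain ⟨J, rfl⟩ := hy
        exact key i I J
      | zero => simp
      | add y z hy hz ihy ihz => simp only [mul_add, map_add, ihy, ihz]
      | smul a y hy ihy => simp only [mul_smul_comm, map_smul, ihy]
    | zero => simp
    | add x y hx hy ihx ihy =>
      simp only [mul_add, map_add, LinearMap.add_apply, ihx, ihy]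
    | smul a x hx ihx =>
      simp only [mul_smul_comm, map_smul, LinearMap.smul_apply, ihx]
  -- the set of v satisfying the duality is a submodule closed under multiplication
  let S : Submodule ℝ (CliffordAlgebra (Qe ε)) :=
    { carrier := {v | ∀ u w, Bf u (v * w) = Bf (reverse v * u) w}
      add_mem' := by
        intro a b ha hb u w
        simp only [add_mul, map_add, LinearMap.add_apply, ha u w, hb u w]
      zero_mem' := by intro u w; simp
      smul_mem' := by
        intro c v hv u w
        simp only [smul_mul_assoc, map_smul, LinearMap.smul_apply, hv u w] }
  intro u v w
  suffices hS : v ∈ S by exact hS u w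
  induction v using CliffordAlgebra.induction with
  | algebraMap r =>
    intro u w
    simp only [reverse.commutes, ← Algebra.smul_def, map_smul, LinearMap.smul_apply]
  | ι x =>
    have : (ι (Qe ε)) x = ∑ i, x i • gen ε i := by
      conv_lhs => rw [pi_eq_sum_univ x, map_sum]
      congr 1
      ext i
      rw [map_smul, gen]
      congr 2
      ext j
      rw [Pi.single_apply]
      simp [eq_comm]
    rw [this]
    apply S.sum_mem
    intro i _
    apply S.smul_mem
    intro u w
    rw [show reverse (gen ε i) = gen ε i from reverse_ι _]
    exact hgen i u w
  | mul a b ha hb =>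
    intro u w
    rw [mul_assoc, ha, hb, reverse.map_mul, mul_assoc]
  | add a b ha hb => exact S.add_mem ha hb
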